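/- arXiv:2501.17100 — 8 statements merged into one kernel-verified Lean document; each statement's English description precedes it below -/
import Mathlib

section
/- Let a₁, a₂ ∈ [0,∞), b₂₁ ∈ (−∞,0], b₁₁, b₂₂ ∈ (0,∞) and y₁, y₂ ∈ [0,∞). Then the function e₂ converges at infinity, namely e₂(t) → a₂/b₂₂ − b₂₁·a₁/(b₁₁·b₂₂) as t → ∞. (This is the subcritical-case behavior of E(Y_t^{(2)}) in Proposition 3.1.) -/
/-!
On `[0, ∞)` the first mean is affine in one exponential,
`e₁(s) = a₁/b₁₁ + (y₁ - a₁/b₁₁) e^{-b₁₁ s}`. Convolving the kernel `e^{-b₂₂ (t - s)}` with the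
constant part gives `(a₁/b₁₁)(1 - e^{-b₂₂ t})/b₂₂`, and with the exponential part a term between
`0` and `t e^{-min(b₁₁, b₂₂) t} → 0`; every other term of `e₂` is explicit.
-/

open Filter Real Set Topology

lemma integral_exp_neg_mul {b : ℝ} (hb : b ≠ 0) (t : ℝ) :
    ∫ u in (0:ℝ)..t, exp (-b * u) = (1 - exp (-b * t)) / b := by
  rw [intervalIntegral.integral_comp_mul_left exp (neg_ne_zero.mpr hb), integral_exp]
  simp only [mul_zero, exp_zero, smul_eq_mul, inv_neg]
  field_simp
  ring

lemma integral_exp_neg_mul_sub {b : ℝ} (hb : b ≠ 0) (t : ℝ) :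
    ∫ s in (0:ℝ)..t, exp (-b * (t - s)) = (1 - exp (-b * t)) / b := by
  rw [intervalIntegral.integral_comp_sub_left (fun u => exp (-b * u)), sub_self, sub_zero,
    integral_exp_neg_mul hb]

lemma tendsto_exp_neg_mul_atTop {b : ℝ} (hb : 0 < b) :
    Tendsto (fun t => exp (-b * t)) atTop (𝓝 0) :=
  tendsto_exp_atBot.comp (tendsto_id.const_mul_atTop_of_neg (neg_neg_of_pos hb))

lemma tendsto_mul_exp_neg_mul_atTop {b : ℝ} (hb : 0 < b) :
    Tendsto (fun t => t * exp (-b * t)) atTop (𝓝 0) := by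
  have := ((tendsto_pow_mul_exp_neg_atTop_nhds_zero 1).comp
    (tendsto_id.const_mul_atTop hb)).const_mul b⁻¹
  rw [mul_zero] at this
  refine this.congr fun t => ?_
  field_simp
  simp

lemma tendsto_one_sub_exp_neg_mul_div {b : ℝ} (hb : 0 < b) :
    Tendsto (fun t => (1 - exp (-b * t)) / b) atTop (𝓝 b⁻¹) := by
  simpa using ((tendsto_exp_neg_mul_atTop hb).const_sub 1).div_const b

lemma tendsto_integral_exp_neg_mul_sub_mul_exp {a b : ℝ} (ha : 0 < a) (hb : 0 < b) :
    Tendsto (fun t => ∫ s in (0:ℝ)..t, exp (-b * (t - s)) * exp (-a * s)) atTop (𝓝 0) := by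
  set m := min a b
  have hbound : ∀ t, ∀ s ∈ Icc 0 t, exp (-b * (t - s)) * exp (-a * s) ≤ exp (-m * t) := by
    intro t s ⟨hs0, hst⟩
    rw [← exp_add, exp_le_exp]
    nlinarith [min_le_left a b, min_le_right a b]
  refine tendsto_of_tendsto_of_tendsto_of_le_of_le' tendsto_const_nhds
    (tendsto_mul_exp_neg_mul_atTop (lt_min ha hb)) ?_ ?_
  · filter_upwards [eventually_ge_atTop 0] with t ht
    exact intervalIntegral.integral_nonneg ht fun s _ => by positivity
  · filter_upwards [eventually_ge_atTop 0] with t ht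
    calc ∫ s in (0:ℝ)..t, exp (-b * (t - s)) * exp (-a * s)
        ≤ ∫ _ in (0:ℝ)..t, exp (-m * t) :=
          intervalIntegral.integral_mono_on ht (Continuous.intervalIntegrable (by fun_prop) _ _)
            intervalIntegrable_const (hbound t)
      _ = t * exp (-m * t) := by simp

lemma tendsto_integral_exp_neg_mul_sub_mul_add_mul_exp {a b : ℝ} (ha : 0 < a) (hb : 0 < b)
    (c d : ℝ) :
    Tendsto (fun t => ∫ s in (0:ℝ)..t, exp (-b * (t - s)) * (d + c * exp (-a * s)))
      atTop (𝓝 (d / b)) := by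
  have hsplit : ∀ t, ∫ s in (0:ℝ)..t, exp (-b * (t - s)) * (d + c * exp (-a * s))
      = d * ((1 - exp (-b * t)) / b)
        + c * ∫ s in (0:ℝ)..t, exp (-b * (t - s)) * exp (-a * s) := by
    intro t
    have hexpand : (fun s => exp (-b * (t - s)) * (d + c * exp (-a * s)))
        = fun s => d * exp (-b * (t - s)) + c * (exp (-b * (t - s)) * exp (-a * s)) := by
      funext s
      ring
    rw [hexpand, intervalIntegral.integral_add (Continuous.intervalIntegrable (by fun_prop) _ _)
      (Continuous.intervalIntegrable (by fun_prop) _ _), intervalIntegral.integral_const_mul,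
      intervalIntegral.integral_const_mul, integral_exp_neg_mul_sub hb.ne']
  have hlim := ((tendsto_one_sub_exp_neg_mul_div hb).const_mul d).add
    ((tendsto_integral_exp_neg_mul_sub_mul_exp ha hb).const_mul c)
  rw [mul_zero, add_zero, ← div_eq_mul_inv] at hlim
  exact hlim.congr fun t => (hsplit t).symm

lemma mul_exp_neg_mul_add_mul_integral {b : ℝ} (hb : b ≠ 0) (y a t : ℝ) :
    y * exp (-b * t) + a * ∫ u in (0:ℝ)..t, exp (-b * u)
      = a / b + (y - a / b) * exp (-b * t) := by
  rw [integral_exp_neg_mul hb]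
  ring

theorem doubleHeston_subcritical_mean_Y2_general
    (a1 a2 b21 b11 b22 y1 y2 : ℝ)
    (hb11 : 0 < b11) (hb22 : 0 < b22)
    (e1 e2 : ℝ → ℝ)
    (he1 : ∀ t, 0 ≤ t →
      e1 t = y1 * Real.exp (-b11 * t) + a1 * ∫ u in (0:ℝ)..t, Real.exp (-b11 * u))
    (he2 : ∀ t, 0 ≤ t →
      e2 t = y2 * Real.exp (-b22 * t) + a2 * (∫ u in (0:ℝ)..t, Real.exp (-b22 * u))
        - b21 * ∫ s in (0:ℝ)..t, Real.exp (-b22 * (t - s)) * e1 s) :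
    Tendsto e2 atTop (nhds (a2 / b22 - b21 * a1 / (b11 * b22))) := by
  have he1_closed : ∀ t, 0 ≤ t → e1 t = a1 / b11 + (y1 - a1 / b11) * exp (-b11 * t) :=
    fun t ht => by rw [he1 t ht, mul_exp_neg_mul_add_mul_integral hb11.ne']
  have he2_closed : ∀ t, 0 ≤ t →
      e2 t = y2 * exp (-b22 * t) + a2 * ((1 - exp (-b22 * t)) / b22)
        - b21 * ∫ s in (0:ℝ)..t,
          exp (-b22 * (t - s)) * (a1 / b11 + (y1 - a1 / b11) * exp (-b11 * s)) := by
    intro t ht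
    rw [he2 t ht, integral_exp_neg_mul hb22.ne']
    congr 2
    refine intervalIntegral.integral_congr fun s hs => ?_
    rw [uIcc_of_le ht] at hs
    simp only [he1_closed s hs.1]
  have hlim := (((tendsto_exp_neg_mul_atTop hb22).const_mul y2).add
    ((tendsto_one_sub_exp_neg_mul_div hb22).const_mul a2)).sub
    ((tendsto_integral_exp_neg_mul_sub_mul_add_mul_exp hb11 hb22
      (y1 - a1 / b11) (a1 / b11)).const_mul b21)
  convert hlim.congr' ?_ using 2
  · field_simp
    ring
  · filter_upwards [eventually_ge_atTop 0] with t ht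
    exact (he2_closed t ht).symm

theorem doubleHeston_subcritical_mean_Y2
    (a1 a2 b21 b11 b22 y1 y2 : ℝ)
    (ha1 : 0 ≤ a1) (ha2 : 0 ≤ a2) (hb21 : b21 ≤ 0)
    (hb11 : 0 < b11) (hb22 : 0 < b22)
    (hy1 : 0 ≤ y1) (hy2 : 0 ≤ y2)
    (e1 e2 : ℝ → ℝ)
    (he1 : ∀ t, 0 ≤ t →
      e1 t = y1 * Real.exp (-b11 * t) + a1 * ∫ u in (0:ℝ)..t, Real.exp (-b11 * u))
    (he2 : ∀ t, 0 ≤ t →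
      e2 t = y2 * Real.exp (-b22 * t) + a2 * (∫ u in (0:ℝ)..t, Real.exp (-b22 * u))
        - b21 * ∫ s in (0:ℝ)..t, Real.exp (-b22 * (t - s)) * e1 s) :
    Tendsto e2 atTop (nhds (a2 / b22 - b21 * a1 / (b11 * b22))) :=
  doubleHeston_subcritical_mean_Y2_general a1 a2 b21 b11 b22 y1 y2 hb11 hb22 e1 e2 he1 he2
end

section
/- Let a₁, a₂ ∈ [0,∞), b₂₁ ∈ (−∞,0], b₁₁ ∈ (−∞,0), b₂₂ ∈ (0,∞) and y₁, y₂ ∈ [0,∞). Then e^{b₁₁ t}·e₁(t) → y₁ − a₁/b₁₁ and e^{b₁₁ t}·e₂(t) → −b₂₁·(y₁ − a₁/b₁₁)/(b₂₂ − b₁₁) as t → ∞, i.e., E(Y_t^{(2)}) grows exponentially with rate −b₁₁. (This is a supercritical case of Proposition 3.1.) -/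
/-!
Both integrals can be computed in closed form. With `C = y₁ - a₁/b₁₁`, one gets
`e₁(t) = C e^{-b₁₁ t} + a₁/b₁₁`, and then `e₂(t) = K e^{-b₁₁ t} + P + Q e^{-b₂₂ t}` with
`K = -b₂₁ C / (b₂₂ - b₁₁)`. As `b₁₁ < 0 < b₂₂`, the growing exponential `e^{-b₁₁ t}` dominates,
and multiplying by `e^{b₁₁ t}` leaves exactly its coefficient in the limit.
-/

open MeasureTheory Filter Real Topology

lemma integral_exp_mul {k : ℝ} (hk : k ≠ 0) (t : ℝ) :
    ∫ u in (0:ℝ)..t, exp (k * u) = (exp (k * t) - 1) / k := by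
  rw [intervalIntegral.integral_comp_mul_left (fun x => exp x) hk, integral_exp]
  simp [div_eq_inv_mul]

lemma integral_exp_neg_mul_sub_mul_exp_neg_mul {α β : ℝ} (h : α ≠ β) (t : ℝ) :
    ∫ s in (0:ℝ)..t, exp (-β * (t - s)) * exp (-α * s)
      = (exp (-α * t) - exp (-β * t)) / (β - α) := by
  have hβα : β - α ≠ 0 := sub_ne_zero.mpr h.symm
  simp_rw [← exp_add, show ∀ s, -β * (t - s) + -α * s = -β * t + (β - α) * s by intro s; ring,
    exp_add]
  rw [intervalIntegral.integral_const_mul, integral_exp_mul hβα, mul_div_assoc', mul_sub,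
    ← exp_add]
  ring_nf

lemma mul_exp_neg_add_mul_integral_exp_neg {b : ℝ} (hb : b ≠ 0) (y a t : ℝ) :
    y * exp (-b * t) + a * ∫ u in (0:ℝ)..t, exp (-b * u)
      = (y - a / b) * exp (-b * t) + a / b := by
  rw [integral_exp_mul (neg_ne_zero.mpr hb)]
  field_simp
  ring

lemma integral_exp_neg_mul_sub_mul_affine_exp {α β : ℝ} (hαβ : α ≠ β) (hβ : β ≠ 0)
    (C D t : ℝ) :
    ∫ s in (0:ℝ)..t, exp (-β * (t - s)) * (C * exp (-α * s) + D)
      = C * ((exp (-α * t) - exp (-β * t)) / (β - α)) + D * ((1 - exp (-β * t)) / β) := by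
  have hconst := integral_exp_neg_mul_sub_mul_exp_neg_mul hβ.symm t
  simp only [neg_zero, zero_mul, exp_zero, mul_one, sub_zero] at hconst
  simp_rw [mul_add, mul_left_comm _ C]
  rw [intervalIntegral.integral_add, intervalIntegral.integral_const_mul,
    integral_exp_neg_mul_sub_mul_exp_neg_mul hαβ, intervalIntegral.integral_mul_const, hconst]
  · ring
  all_goals apply Continuous.intervalIntegrable; fun_prop

lemma doubleHeston_mean_Y2_eq {b11 b22 : ℝ} (hb : b11 ≠ b22) (hb22 : b22 ≠ 0)
    (y2 a2 b21 C D : ℝ) {e1 : ℝ → ℝ} {t : ℝ} (ht : 0 ≤ t)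
    (he1 : ∀ s ∈ Set.Icc 0 t, e1 s = C * exp (-b11 * s) + D) :
    y2 * exp (-b22 * t) + a2 * (∫ u in (0:ℝ)..t, exp (-b22 * u))
        - b21 * ∫ s in (0:ℝ)..t, exp (-b22 * (t - s)) * e1 s
      = -b21 * C / (b22 - b11) * exp (-b11 * t)
        + ((a2 - b21 * D) / b22
          + (y2 - (a2 - b21 * D) / b22 + b21 * C / (b22 - b11)) * exp (-b22 * t)) := by
  have hconv : ∫ s in (0:ℝ)..t, exp (-b22 * (t - s)) * e1 s
      = ∫ s in (0:ℝ)..t, exp (-b22 * (t - s)) * (C * exp (-b11 * s) + D) :=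
    intervalIntegral.integral_congr fun s hs => by
      rw [Set.uIcc_of_le ht] at hs
      simp only [he1 s hs]
  rw [hconv, integral_exp_neg_mul_sub_mul_affine_exp hb hb22,
    integral_exp_mul (neg_ne_zero.mpr hb22)]
  have hgap : b22 - b11 ≠ 0 := sub_ne_zero.mpr hb.symm
  field_simp
  ring

lemma tendsto_exp_mul_atTop_nhds_zero {c : ℝ} (hc : c < 0) :
    Tendsto (fun t => exp (c * t)) atTop (𝓝 0) :=
  tendsto_exp_atBot.comp (tendsto_id.const_mul_atTop_of_neg hc)

lemma tendsto_exp_mul_mul_of_eventuallyEq {c K l : ℝ} (hc : c < 0) {f S : ℝ → ℝ}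
    (hf : f =ᶠ[atTop] fun t => K * exp (-c * t) + S t) (hS : Tendsto S atTop (𝓝 l)) :
    Tendsto (fun t => exp (c * t) * f t) atTop (𝓝 K) := by
  have h := tendsto_const_nhds (x := K) |>.add ((tendsto_exp_mul_atTop_nhds_zero hc).mul hS)
  rw [zero_mul, add_zero] at h
  refine h.congr' ?_
  filter_upwards [hf] with t ht
  rw [ht, mul_add, ← mul_assoc, mul_comm _ K, mul_assoc, ← exp_add]
  simp

theorem doubleHeston_supercritical_mean_Y2_general
    (a1 a2 b21 b11 b22 y1 y2 : ℝ)
    (hb11 : b11 < 0) (hb22 : 0 < b22)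
    (e1 e2 : ℝ → ℝ)
    (he1 : ∀ t, 0 ≤ t →
      e1 t = y1 * Real.exp (-b11 * t) + a1 * ∫ u in (0:ℝ)..t, Real.exp (-b11 * u))
    (he2 : ∀ t, 0 ≤ t →
      e2 t = y2 * Real.exp (-b22 * t) + a2 * (∫ u in (0:ℝ)..t, Real.exp (-b22 * u))
        - b21 * ∫ s in (0:ℝ)..t, Real.exp (-b22 * (t - s)) * e1 s) :
    Tendsto (fun t => Real.exp (b11 * t) * e1 t) atTop (nhds (y1 - a1 / b11)) ∧
    Tendsto (fun t => Real.exp (b11 * t) * e2 t) atTop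
      (nhds (-b21 * (y1 - a1 / b11) / (b22 - b11))) := by
  have he1' : ∀ s, 0 ≤ s → e1 s = (y1 - a1 / b11) * exp (-b11 * s) + a1 / b11 := fun s hs =>
    (he1 s hs).trans (mul_exp_neg_add_mul_integral_exp_neg hb11.ne y1 a1 s)
  constructor
  · exact tendsto_exp_mul_mul_of_eventuallyEq hb11 ((eventually_ge_atTop 0).mono he1')
      (tendsto_const_nhds (x := a1 / b11))
  · obtain ⟨P, Q, hPQ⟩ : ∃ P Q : ℝ, ∀ t, 0 ≤ t → e2 t =
        -b21 * (y1 - a1 / b11) / (b22 - b11) * exp (-b11 * t) + (P + Q * exp (-b22 * t)) :=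
      ⟨_, _, fun t ht => (he2 t ht).trans <| doubleHeston_mean_Y2_eq (hb11.trans hb22).ne
        hb22.ne' y2 a2 b21 _ _ ht fun s hs => he1' s hs.1⟩
    have hdecay := tendsto_exp_mul_atTop_nhds_zero (neg_lt_zero.mpr hb22)
    exact tendsto_exp_mul_mul_of_eventuallyEq hb11 ((eventually_ge_atTop 0).mono hPQ)
      (tendsto_const_nhds.add (hdecay.const_mul Q))

theorem doubleHeston_supercritical_mean_Y2
    (a1 a2 b21 b11 b22 y1 y2 : ℝ)
    (ha1 : 0 ≤ a1) (ha2 : 0 ≤ a2) (hb21 : b21 ≤ 0)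
    (hb11 : b11 < 0) (hb22 : 0 < b22)
    (hy1 : 0 ≤ y1) (hy2 : 0 ≤ y2)
    (e1 e2 : ℝ → ℝ)
    (he1 : ∀ t, 0 ≤ t →
      e1 t = y1 * Real.exp (-b11 * t) + a1 * ∫ u in (0:ℝ)..t, Real.exp (-b11 * u))
    (he2 : ∀ t, 0 ≤ t →
      e2 t = y2 * Real.exp (-b22 * t) + a2 * (∫ u in (0:ℝ)..t, Real.exp (-b22 * u))
        - b21 * ∫ s in (0:ℝ)..t, Real.exp (-b22 * (t - s)) * e1 s) :
    Tendsto (fun t => Real.exp (b11 * t) * e1 t) atTop (nhds (y1 - a1 / b11)) ∧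
    Tendsto (fun t => Real.exp (b11 * t) * e2 t) atTop
      (nhds (-b21 * (y1 - a1 / b11) / (b22 - b11))) :=
  doubleHeston_supercritical_mean_Y2_general a1 a2 b21 b11 b22 y1 y2 hb11 hb22 e1 e2 he1 he2
end

section
/- Let a₁, a₂ ∈ [0,∞), b₂₁ ∈ (−∞,0], b₁₁, b₂₂ ∈ (0,∞), θ ∈ (−∞,0), m, κ₁, κ₂ ∈ ℝ and y₁, y₂ ∈ [0,∞), x₀ ∈ ℝ. Then e^{θ t}·e₃(t) converges as t → ∞, with limit x₀ − m/θ − κ₁·∫₀^∞ e^{θ s}·e₁(s) ds − κ₂·∫₀^∞ e^{θ s}·e₂(s) ds (both improper integrals being finite), i.e., E(X_t) grows exponentially with rate −θ. (This is a supercritical case of Proposition 3.1.) -/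
open MeasureTheory Filter Real

lemma my_int_exp (c t : ℝ) (hc : c ≠ 0) :
    ∫ u in (0:ℝ)..t, Real.exp (c * u) = (Real.exp (c * t) - 1) / c := by
  have h : ∀ u ∈ Set.uIcc (0:ℝ) t,
      HasDerivAt (fun x => Real.exp (c * x) / c) (Real.exp (c * u)) u := by
    intro u _
    have h1 : HasDerivAt (fun x : ℝ => c * x) c u := by
      simpa using (hasDerivAt_id u).const_mul c
    have h2 := (h1.exp).div_const c
    simpa [mul_div_assoc, mul_comm, hc] using h2
  rw [intervalIntegral.integral_eq_sub_of_hasDerivAt h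
    ((Real.continuous_exp.comp (continuous_const.mul continuous_id)).intervalIntegrable _ _)]
  simp [Real.exp_zero]
  ring

lemma my_conv (c : ℝ) (f : ℝ → ℝ) (t : ℝ) :
    ∫ s in (0:ℝ)..t, Real.exp (-c * (t - s)) * f s
      = Real.exp (-c * t) * ∫ s in (0:ℝ)..t, Real.exp (c * s) * f s := by
  rw [← intervalIntegral.integral_const_mul]
  apply intervalIntegral.integral_congr
  intro s _
  show Real.exp (-c * (t - s)) * f s = Real.exp (-c * t) * (Real.exp (c * s) * f s)
  rw [← mul_assoc, ← Real.exp_add]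
  congr 2
  ring

theorem doubleHeston_supercritical_mean_X
    (a1 a2 b21 b11 b22 θ m κ1 κ2 y1 y2 x0 : ℝ)
    (ha1 : 0 ≤ a1) (ha2 : 0 ≤ a2) (hb21 : b21 ≤ 0)
    (hb11 : 0 < b11) (hb22 : 0 < b22) (hθ : θ < 0)
    (hy1 : 0 ≤ y1) (hy2 : 0 ≤ y2)
    (e1 e2 e3 : ℝ → ℝ)
    (he1 : ∀ t, 0 ≤ t →
      e1 t = y1 * Real.exp (-b11 * t) + a1 * ∫ u in (0:ℝ)..t, Real.exp (-b11 * u))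
    (he2 : ∀ t, 0 ≤ t →
      e2 t = y2 * Real.exp (-b22 * t) + a2 * (∫ u in (0:ℝ)..t, Real.exp (-b22 * u))
        - b21 * ∫ s in (0:ℝ)..t, Real.exp (-b22 * (t - s)) * e1 s)
    (he3 : ∀ t, 0 ≤ t →
      e3 t = x0 * Real.exp (-θ * t) + m * (∫ u in (0:ℝ)..t, Real.exp (-θ * u))
        - κ1 * (∫ s in (0:ℝ)..t, Real.exp (-θ * (t - s)) * e1 s)
        - κ2 * ∫ s in (0:ℝ)..t, Real.exp (-θ * (t - s)) * e2 s) :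
    IntegrableOn (fun s => Real.exp (θ * s) * e1 s) (Set.Ioi 0) ∧
    IntegrableOn (fun s => Real.exp (θ * s) * e2 s) (Set.Ioi 0) ∧
    Tendsto (fun t => Real.exp (θ * t) * e3 t) atTop
      (nhds (x0 - m / θ - κ1 * (∫ s in Set.Ioi (0:ℝ), Real.exp (θ * s) * e1 s)
        - κ2 * ∫ s in Set.Ioi (0:ℝ), Real.exp (θ * s) * e2 s)) := by
  have hb11' : (-b11 : ℝ) ≠ 0 := neg_ne_zero.mpr hb11.ne'
  have hb22' : (-b22 : ℝ) ≠ 0 := neg_ne_zero.mpr hb22.ne'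
  have hθ' : (-θ : ℝ) ≠ 0 := neg_ne_zero.mpr hθ.ne
  -- explicit continuous version of e1
  set g1 : ℝ → ℝ := fun s =>
    y1 * Real.exp (-b11 * s) + a1 * ((Real.exp (-b11 * s) - 1) / (-b11)) with hg1def
  have hg1c : Continuous g1 := by fun_prop
  have he1g : ∀ t, 0 ≤ t → e1 t = g1 t := by
    intro t ht
    rw [he1 t ht, my_int_exp _ _ hb11']
  have hg1pos : ∀ s, 0 ≤ s → 0 ≤ g1 s := by
    intro s hs
    have h1 : Real.exp (-b11 * s) ≤ 1 := by
      rw [Real.exp_le_one_iff]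
      nlinarith
    have h2 : (0:ℝ) < Real.exp (-b11 * s) := Real.exp_pos _
    have : 0 ≤ a1 * ((Real.exp (-b11 * s) - 1) / (-b11)) := by
      apply mul_nonneg ha1
      rw [div_nonneg_iff]
      exact Or.inr ⟨by nlinarith, by nlinarith⟩
    simp only [hg1def]
    nlinarith
  have hg1le : ∀ s, 0 ≤ s → g1 s ≤ y1 + a1 / b11 := by
    intro s hs
    have h1 : Real.exp (-b11 * s) ≤ 1 := by
      rw [Real.exp_le_one_iff]; nlinarith
    have h2 : (0:ℝ) < Real.exp (-b11 * s) := Real.exp_pos _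
    have h3 : a1 * ((Real.exp (-b11 * s) - 1) / (-b11)) ≤ a1 / b11 := by
      rw [div_neg, ← neg_div, neg_sub, ← mul_div_assoc, div_le_div_iff₀ hb11 hb11]
      nlinarith [mul_nonneg (mul_nonneg ha1 h2.le) hb11.le]
    simp only [hg1def]
    nlinarith
  set C1 : ℝ := y1 + a1 / b11 with hC1def
  have hC1 : 0 ≤ C1 := by positivity
  -- convolution appearing in e2, rewritten
  set P1 : ℝ → ℝ := fun t => ∫ s in (0:ℝ)..t, Real.exp (b22 * s) * g1 s with hP1def
  have hP1c : Continuous P1 :=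
    intervalIntegral.continuous_primitive
      (fun a b => (by fun_prop : Continuous fun s => Real.exp (b22 * s) * g1 s).intervalIntegrable a b) 0
  set g2 : ℝ → ℝ := fun t =>
    y2 * Real.exp (-b22 * t) + a2 * ((Real.exp (-b22 * t) - 1) / (-b22))
      - b21 * (Real.exp (-b22 * t) * P1 t) with hg2def
  have hg2c : Continuous g2 := by fun_prop
  have he2g : ∀ t, 0 ≤ t → e2 t = g2 t := by
    intro t ht
    have hcong : ∫ s in (0:ℝ)..t, Real.exp (-b22 * (t - s)) * e1 s
        = ∫ s in (0:ℝ)..t, Real.exp (-b22 * (t - s)) * g1 s := by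
      apply intervalIntegral.integral_congr
      intro s hs
      rw [Set.uIcc_of_le ht] at hs
      show Real.exp (-b22 * (t - s)) * e1 s = Real.exp (-b22 * (t - s)) * g1 s
      rw [he1g s hs.1]
    rw [he2 t ht, my_int_exp _ _ hb22', hcong, my_conv b22 g1 t]
  -- bounds on the convolution term
  have hP1nonneg : ∀ t, 0 ≤ t → 0 ≤ P1 t := by
    intro t ht
    apply intervalIntegral.integral_nonneg ht
    intro s hs
    exact mul_nonneg (Real.exp_pos _).le (hg1pos s hs.1)
  have hP1le : ∀ t, 0 ≤ t → P1 t ≤ C1 * ((Real.exp (b22 * t) - 1) / b22) := by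
    intro t ht
    have h1 : P1 t ≤ ∫ s in (0:ℝ)..t, Real.exp (b22 * s) * C1 := by
      apply intervalIntegral.integral_mono_on ht
      · exact (by fun_prop : Continuous fun s => Real.exp (b22 * s) * g1 s).intervalIntegrable 0 t
      · exact (by fun_prop : Continuous fun s => Real.exp (b22 * s) * C1).intervalIntegrable 0 t
      · intro s hs
        exact mul_le_mul_of_nonneg_left (hg1le s hs.1) (Real.exp_pos _).le
    calc P1 t ≤ ∫ s in (0:ℝ)..t, Real.exp (b22 * s) * C1 := h1
      _ = C1 * ((Real.exp (b22 * t) - 1) / b22) := by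
          rw [intervalIntegral.integral_mul_const, my_int_exp _ _ hb22.ne']
          ring
  have hconvBound : ∀ t, 0 ≤ t → Real.exp (-b22 * t) * P1 t ≤ C1 / b22 := by
    intro t ht
    have h1 := hP1le t ht
    have h2 : (0:ℝ) < Real.exp (-b22 * t) := Real.exp_pos _
    have h3 : Real.exp (-b22 * t) * Real.exp (b22 * t) = 1 := by
      rw [← Real.exp_add]; simp
    have h4 : Real.exp (-b22 * t) ≤ 1 := by
      rw [Real.exp_le_one_iff]; nlinarith
    have h5 : Real.exp (-b22 * t) * P1 t ≤ Real.exp (-b22 * t) * (C1 * ((Real.exp (b22 * t) - 1) / b22)) :=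
      mul_le_mul_of_nonneg_left h1 h2.le
    have h6 : Real.exp (-b22 * t) * (C1 * ((Real.exp (b22 * t) - 1) / b22))
        = C1 * (1 - Real.exp (-b22 * t)) / b22 := by
      simp only [neg_mul] at h3 ⊢
      field_simp
      linear_combination C1 * h3
    rw [h6] at h5
    have h7 : C1 * (1 - Real.exp (-b22 * t)) / b22 ≤ C1 / b22 := by
      rw [div_le_div_iff₀ hb22 hb22]
      nlinarith [mul_nonneg (mul_nonneg hC1 h2.le) hb22.le]
    linarith
  have hg2pos : ∀ t, 0 ≤ t → 0 ≤ g2 t := by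
    intro t ht
    have h1 : Real.exp (-b22 * t) ≤ 1 := by
      rw [Real.exp_le_one_iff]; nlinarith
    have h2 : (0:ℝ) < Real.exp (-b22 * t) := Real.exp_pos _
    have h3 : 0 ≤ a2 * ((Real.exp (-b22 * t) - 1) / (-b22)) := by
      apply mul_nonneg ha2
      rw [div_nonneg_iff]
      exact Or.inr ⟨by nlinarith, by nlinarith⟩
    have h4 : 0 ≤ Real.exp (-b22 * t) * P1 t := mul_nonneg h2.le (hP1nonneg t ht)
    simp only [hg2def]
    nlinarith
  set C2 : ℝ := y2 + a2 / b22 + (-b21) * (C1 / b22) with hC2def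
  have hg2le : ∀ t, 0 ≤ t → g2 t ≤ C2 := by
    intro t ht
    have h1 : Real.exp (-b22 * t) ≤ 1 := by
      rw [Real.exp_le_one_iff]; nlinarith
    have h2 : (0:ℝ) < Real.exp (-b22 * t) := Real.exp_pos _
    have h3 : a2 * ((Real.exp (-b22 * t) - 1) / (-b22)) ≤ a2 / b22 := by
      rw [div_neg, ← neg_div, neg_sub, ← mul_div_assoc, div_le_div_iff₀ hb22 hb22]
      nlinarith [mul_nonneg (mul_nonneg ha2 h2.le) hb22.le]
    have h4 := hconvBound t ht
    have h5 : 0 ≤ Real.exp (-b22 * t) * P1 t := mul_nonneg h2.le (hP1nonneg t ht)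
    simp only [hg2def, hC2def]
    nlinarith [mul_le_mul_of_nonneg_left h4 (neg_nonneg.mpr hb21)]
  -- integrability
  have hexpInt : IntegrableOn (fun s => Real.exp (θ * s)) (Set.Ioi (0:ℝ)) := by
    simpa using exp_neg_integrableOn_Ioi 0 (neg_pos.mpr hθ)
  have genInt : ∀ (g : ℝ → ℝ) (C : ℝ), Continuous g → (∀ s, 0 ≤ s → 0 ≤ g s) →
      (∀ s, 0 ≤ s → g s ≤ C) → IntegrableOn (fun s => Real.exp (θ * s) * g s) (Set.Ioi 0) := by
    intro g C hc hpos hle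
    apply Integrable.mono (hexpInt.const_mul C)
    · exact ((Real.continuous_exp.comp (continuous_const.mul continuous_id)).mul hc).aestronglyMeasurable.restrict
    · filter_upwards [ae_restrict_mem measurableSet_Ioi] with s hs
      have hs0 : (0:ℝ) ≤ s := le_of_lt hs
      have h1 : (0:ℝ) < Real.exp (θ * s) := Real.exp_pos _
      have h2 := hpos s hs0
      have h3 := hle s hs0
      have hC : 0 ≤ C := le_trans h2 h3
      rw [Real.norm_eq_abs, Real.norm_eq_abs, abs_of_nonneg (mul_nonneg h1.le h2),
        abs_of_nonneg (by positivity)]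
      nlinarith
  have hint1 : IntegrableOn (fun s => Real.exp (θ * s) * e1 s) (Set.Ioi 0) := by
    apply (genInt g1 C1 hg1c hg1pos hg1le).congr
    filter_upwards [ae_restrict_mem measurableSet_Ioi] with s hs
    rw [he1g s (le_of_lt hs)]
  have hint2 : IntegrableOn (fun s => Real.exp (θ * s) * e2 s) (Set.Ioi 0) := by
    apply (genInt g2 C2 hg2c hg2pos hg2le).congr
    filter_upwards [ae_restrict_mem measurableSet_Ioi] with s hs
    rw [he2g s (le_of_lt hs)]
  refine ⟨hint1, hint2, ?_⟩
  -- the limit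
  have heq : ∀ t, 0 ≤ t → Real.exp (θ * t) * e3 t
      = x0 + m * ((1 - Real.exp (θ * t)) / (-θ))
        - κ1 * (∫ s in (0:ℝ)..t, Real.exp (θ * s) * e1 s)
        - κ2 * (∫ s in (0:ℝ)..t, Real.exp (θ * s) * e2 s) := by
    intro t ht
    rw [he3 t ht, my_int_exp _ _ hθ', my_conv θ e1 t, my_conv θ e2 t]
    have hinv : Real.exp (-θ * t) = (Real.exp (θ * t))⁻¹ := by
      rw [show -θ * t = -(θ * t) by ring, Real.exp_neg]
    rw [hinv]
    have hne : Real.exp (θ * t) ≠ 0 := (Real.exp_pos _).ne'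
    generalize (∫ s in (0:ℝ)..t, Real.exp (θ * s) * e1 s) = I1
    generalize (∫ s in (0:ℝ)..t, Real.exp (θ * s) * e2 s) = I2
    generalize hE : Real.exp (θ * t) = E at hne ⊢
    have hEi : E * E⁻¹ = 1 := mul_inv_cancel₀ hne
    linear_combination (x0 + m / (-θ) - κ1 * I1 - κ2 * I2) * hEi
  have hTexp : Tendsto (fun t => Real.exp (θ * t)) atTop (nhds 0) :=
    Real.tendsto_exp_atBot.comp ((tendsto_const_mul_atBot_of_neg hθ).mpr tendsto_id)
  have hT1 := intervalIntegral_tendsto_integral_Ioi 0 hint1 tendsto_id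
  have hT2 := intervalIntegral_tendsto_integral_Ioi 0 hint2 tendsto_id
  have hmain : Tendsto (fun t => x0 + m * ((1 - Real.exp (θ * t)) / (-θ))
        - κ1 * (∫ s in (0:ℝ)..t, Real.exp (θ * s) * e1 s)
        - κ2 * (∫ s in (0:ℝ)..t, Real.exp (θ * s) * e2 s)) atTop
      (nhds (x0 + m * ((1 - 0) / (-θ))
        - κ1 * (∫ s in Set.Ioi (0:ℝ), Real.exp (θ * s) * e1 s)
        - κ2 * ∫ s in Set.Ioi (0:ℝ), Real.exp (θ * s) * e2 s)) := by
    exact ((tendsto_const_nhds.add (((tendsto_const_nhds.sub hTexp).div_const (-θ)).const_mul m)).sub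
      (hT1.const_mul κ1)).sub (hT2.const_mul κ2)
  have hval : x0 + m * ((1 - 0) / (-θ))
        - κ1 * (∫ s in Set.Ioi (0:ℝ), Real.exp (θ * s) * e1 s)
        - κ2 * (∫ s in Set.Ioi (0:ℝ), Real.exp (θ * s) * e2 s)
      = x0 - m / θ - κ1 * (∫ s in Set.Ioi (0:ℝ), Real.exp (θ * s) * e1 s)
        - κ2 * ∫ s in Set.Ioi (0:ℝ), Real.exp (θ * s) * e2 s := by
    have h : (1 - (0:ℝ)) / (-θ) = -(1 / θ) := by
      rw [sub_zero, div_neg]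
    rw [h]
    ring
  rw [hval] at hmain
  apply hmain.congr'
  filter_upwards [eventually_ge_atTop (0:ℝ)] with t ht
  exact (heq t ht).symm
end

section
/- Let b, θ ∈ (0,∞), c ∈ [0,∞), let f : [0,∞) → ℝ be continuous with f(t) ≥ b for all t ≥ 0, let h : [0,∞) → ℝ be continuous with |h(t)| ≤ c·e^{−θ t} for all t ≥ 0, and let w : [0,∞) → ℝ be differentiable with w′(t) = −f(t)·w(t) + h(t) for all t ≥ 0. Then |w(t)| ≤ (|w(0)| + c·K(b,θ))·e^{−min(θ, b/2)·t} for all t ≥ 0, where K(b,θ) := 1/|b−θ| if b ≠ θ and K(b,θ) := 2/(e·b) if b = θ. -/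
/-!
Since `f ≥ b`, wherever `w ≥ 0` the equation gives `w' ≤ -b w + c e^{-θt}`, and likewise for `-w`.
A fencing argument therefore bounds `|w|` by the nonnegative solution
`B(t) = |w 0| e^{-bt} + c ∫₀ᵗ e^{-b(t-s)} e^{-θs} ds` of `B' = -b B + c e^{-θt}`. For `b ≠ θ` the
convolution is `(e^{-θt} - e^{-bt}) / (b - θ) ≤ e^{-min(θ,b) t} / |b - θ|`; for `b = θ` it is
`t e^{-bt}`, and `t e^{-bt/2} ≤ 2/(e b)` costs half of the rate.
-/
open MeasureTheory Filter Real

/-- The constant `K(b,θ)` from Step 3 of the proof of Proposition 4.1: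
`K(b,θ) = 1/|b−θ|` if `b ≠ θ` and `K(b,θ) = 2/(e·b)` if `b = θ`. -/
noncomputable def expKernelConst (b θ : ℝ) : ℝ :=
  if b = θ then 2 / (Real.exp 1 * b) else 1 / |b - θ|

open Set

theorem image_le_of_deriv_right_le_linear_boundary {f f' B g : ℝ → ℝ} {a T b : ℝ} (hb : 0 < b)
    (hf : ContinuousOn f (Icc a T)) (hf' : ∀ x ∈ Ico a T, HasDerivWithinAt f (f' x) (Ici x) x)
    (ha : f a ≤ B a) (hB : ContinuousOn B (Icc a T))
    (hB' : ∀ x ∈ Ico a T, HasDerivWithinAt B (-b * B x + g x) (Ici x) x)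
    (bound : ∀ x ∈ Ico a T, B x ≤ f x → f' x ≤ -b * f x + g x) :
    ∀ ⦃x⦄, x ∈ Icc a T → f x ≤ B x := by
  intro x hx
  -- `B + ε` is a strict fence: where `f = B + ε`, `f' ≤ -b (B + ε) + g < B'`.
  refine le_of_forall_pos_le_add fun ε hε => ?_
  refine image_le_of_deriv_right_lt_deriv_boundary' (B := fun y => B y + ε) hf hf'
    (by linarith) (hB.add continuousOn_const) (fun y hy => (hB' y hy).add_const ε)
    (fun y hy hfy => ?_) hx
  have := bound y hy (by linarith)
  nlinarith

theorem le_of_hasDerivAt_damped {f k v B g : ℝ → ℝ} {a T b : ℝ} (hb : 0 < b)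
    (hf : ∀ x ∈ Ico a T, b ≤ f x) (hk : ∀ x ∈ Ico a T, k x ≤ g x)
    (hv : ∀ x ∈ Icc a T, HasDerivAt v (-f x * v x + k x) x)
    (hB : ∀ x ∈ Icc a T, HasDerivAt B (-b * B x + g x) x) (hB_nonneg : ∀ x ∈ Ico a T, 0 ≤ B x)
    (ha : v a ≤ B a) (haT : a ≤ T) : v T ≤ B T := by
  refine image_le_of_deriv_right_le_linear_boundary hb
    (fun x hx => (hv x hx).continuousAt.continuousWithinAt)
    (fun x hx => (hv x (Ico_subset_Icc_self hx)).hasDerivWithinAt) ha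
    (fun x hx => (hB x hx).continuousAt.continuousWithinAt)
    (fun x hx => (hB x (Ico_subset_Icc_self hx)).hasDerivWithinAt)
    (fun x hx hBv => ?_) (right_mem_Icc.2 haT)
  have hv_nonneg : 0 ≤ v x := (hB_nonneg x hx).trans hBv
  nlinarith [hf x hx, hk x hx]

theorem abs_le_of_hasDerivAt_damped {f k v B g : ℝ → ℝ} {a T b : ℝ} (hb : 0 < b)
    (hf : ∀ x ∈ Ico a T, b ≤ f x) (hk : ∀ x ∈ Ico a T, |k x| ≤ g x)
    (hv : ∀ x ∈ Icc a T, HasDerivAt v (-f x * v x + k x) x)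
    (hB : ∀ x ∈ Icc a T, HasDerivAt B (-b * B x + g x) x) (hB_nonneg : ∀ x ∈ Ico a T, 0 ≤ B x)
    (ha : |v a| ≤ B a) (haT : a ≤ T) : |v T| ≤ B T := by
  have hv_neg : ∀ x ∈ Icc a T, HasDerivAt (-v) (-f x * (-v) x + (-k) x) x := fun x hx =>
    (hv x hx).neg.congr_deriv (by simp only [Pi.neg_apply]; ring)
  refine abs_le.2 ⟨neg_le.1 ?_, ?_⟩
  · exact le_of_hasDerivAt_damped hb hf (fun x hx => (neg_le_abs _).trans (hk x hx)) hv_neg hB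
      hB_nonneg ((neg_le_abs _).trans ha) haT
  · exact le_of_hasDerivAt_damped hb hf (fun x hx => (le_abs_self _).trans (hk x hx)) hv hB
      hB_nonneg ((le_abs_self _).trans ha) haT

/-- `∫₀ᵗ e^{-b(t-s)} e^{-θs} ds` in closed form. -/
noncomputable def expConvolution (b θ t : ℝ) : ℝ :=
  if b = θ then t * exp (-b * t) else (exp (-θ * t) - exp (-b * t)) / (b - θ)

theorem hasDerivAt_expConvolution (b θ t : ℝ) :
    HasDerivAt (expConvolution b θ) (-b * expConvolution b θ t + exp (-θ * t)) t := by
  have hexp : ∀ r : ℝ, HasDerivAt (fun s => exp (r * s)) (r * exp (r * t)) t := fun r => by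
    simpa [mul_comm] using ((hasDerivAt_id t).const_mul r).exp
  by_cases hbθ : b = θ
  · subst hbθ
    have hfun : expConvolution b b = fun s => s * exp (-b * s) := funext fun s => if_pos rfl
    rw [hfun]
    exact ((hasDerivAt_id' t).mul (hexp (-b))).congr_deriv (by ring)
  · have hfun : expConvolution b θ = fun s => (exp (-θ * s) - exp (-b * s)) / (b - θ) :=
      funext fun s => if_neg hbθ
    have hbθ' : b - θ ≠ 0 := sub_ne_zero.2 hbθ
    rw [hfun]
    exact (((hexp (-θ)).sub (hexp (-b))).div_const (b - θ)).congr_deriv (by field_simp; ring)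

theorem expConvolution_nonneg (b θ : ℝ) {t : ℝ} (ht : 0 ≤ t) : 0 ≤ expConvolution b θ t := by
  unfold expConvolution
  split_ifs with hbθ
  · positivity
  rcases lt_or_gt_of_ne hbθ with hlt | hgt
  · exact div_nonneg_of_nonpos (sub_nonpos.2 (exp_le_exp.2 (by nlinarith))) (by linarith)
  · exact div_nonneg (sub_nonneg.2 (exp_le_exp.2 (by nlinarith))) (by linarith)

theorem expConvolution_le {b : ℝ} (θ : ℝ) (hb : 0 < b) {t : ℝ} (ht : 0 ≤ t) :
    expConvolution b θ t ≤ expKernelConst b θ * exp (-(min θ (b / 2)) * t) := by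
  unfold expConvolution expKernelConst
  split_ifs with hbθ
  · subst hbθ
    rw [min_eq_right (by linarith)]
    have hpeak := mul_exp_neg_le_exp_neg_one (b / 2 * t)
    calc t * exp (-b * t) = 2 / b * (b / 2 * t * exp (-(b / 2 * t))) * exp (-(b / 2) * t) := by
          rw [← mul_assoc, mul_assoc, ← exp_add]; field_simp; ring_nf
      _ ≤ 2 / b * exp (-1) * exp (-(b / 2) * t) := by gcongr
      _ = 2 / (exp 1 * b) * exp (-(b / 2) * t) := by rw [exp_neg]; field_simp
  · have hμθ : exp (-θ * t) ≤ exp (-(min θ (b / 2)) * t) :=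
      exp_le_exp.2 (by nlinarith [min_le_left θ (b / 2)])
    have hμb : exp (-b * t) ≤ exp (-(min θ (b / 2)) * t) :=
      exp_le_exp.2 (by nlinarith [min_le_right θ (b / 2)])
    calc (exp (-θ * t) - exp (-b * t)) / (b - θ)
        ≤ |exp (-θ * t) - exp (-b * t)| / |b - θ| := by rw [← abs_div]; exact le_abs_self _
      _ ≤ exp (-(min θ (b / 2)) * t) / |b - θ| := by
          gcongr
          exact abs_sub_le_of_nonneg_of_le (exp_nonneg _) hμθ (exp_nonneg _) hμb
      _ = 1 / |b - θ| * exp (-(min θ (b / 2)) * t) := by ring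

theorem damped_ode_decay_estimate_general
    (b θ c : ℝ) (hb : 0 < b) (hc : 0 ≤ c)
    (f h w : ℝ → ℝ)
    (hf_lb : ∀ t, 0 ≤ t → b ≤ f t)
    (hh_bd : ∀ t, 0 ≤ t → |h t| ≤ c * Real.exp (-θ * t))
    (hw : ∀ t, 0 ≤ t → HasDerivAt w (-(f t) * w t + h t) t) :
    ∀ t, 0 ≤ t →
      |w t| ≤ (|w 0| + c * expKernelConst b θ) * Real.exp (-(min θ (b / 2)) * t) := by
  intro t ht
  set B : ℝ → ℝ := fun s => |w 0| * exp (-b * s) + c * expConvolution b θ s with hB_def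
  have hB : ∀ s ∈ Icc 0 t, HasDerivAt B (-b * B s + c * exp (-θ * s)) s := fun s _ => by
    refine ((((hasDerivAt_id' s).const_mul (-b)).exp.const_mul |w 0|).add
      ((hasDerivAt_expConvolution b θ s).const_mul c)).congr_deriv ?_
    simp only [hB_def]; ring
  have hB_nonneg : ∀ s ∈ Ico 0 t, 0 ≤ B s := fun s hs =>
    add_nonneg (by positivity) (mul_nonneg hc (expConvolution_nonneg b θ hs.1))
  have hB_zero : |w 0| ≤ B 0 := by
    simpa [hB_def] using mul_nonneg hc (expConvolution_nonneg b θ le_rfl)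
  have hwB : |w t| ≤ B t := abs_le_of_hasDerivAt_damped hb (fun s hs => hf_lb s hs.1)
    (fun s hs => hh_bd s hs.1) (fun s hs => hw s hs.1) hB hB_nonneg hB_zero ht
  calc |w t| ≤ |w 0| * exp (-b * t) + c * expConvolution b θ t := hwB
    _ ≤ |w 0| * exp (-(min θ (b / 2)) * t)
          + c * (expKernelConst b θ * exp (-(min θ (b / 2)) * t)) := by
        gcongr
        · nlinarith [min_le_right θ (b / 2)]
        · exact expConvolution_le θ hb ht
    _ = (|w 0| + c * expKernelConst b θ) * exp (-(min θ (b / 2)) * t) := by ring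

theorem damped_ode_decay_estimate
    (b θ c : ℝ) (hb : 0 < b) (hθ : 0 < θ) (hc : 0 ≤ c)
    (f h w : ℝ → ℝ)
    (hf_cont : ContinuousOn f (Set.Ici 0))
    (hf_lb : ∀ t, 0 ≤ t → b ≤ f t)
    (hh_cont : ContinuousOn h (Set.Ici 0))
    (hh_bd : ∀ t, 0 ≤ t → |h t| ≤ c * Real.exp (-θ * t))
    (hw : ∀ t, 0 ≤ t → HasDerivAt w (-(f t) * w t + h t) t) :
    ∀ t, 0 ≤ t →
      |w t| ≤ (|w 0| + c * expKernelConst b θ) * Real.exp (-(min θ (b / 2)) * t) :=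
  damped_ode_decay_estimate_general b θ c hb hc f h w hf_lb hh_bd hw
end

section
/- Let σ₁₁, σ₁₂, σ₂₁, σ₂₂, b₁₁, b₂₂, θ ∈ (0,∞), b₂₁ ∈ (−∞,0], κ₁, κ₂, u₃ ∈ ℝ and u₄ ∈ (−∞,0]. Let K₁, K₂ : [0,∞) → ℂ be differentiable and satisfy K₁′(t) = (σ₁₁²/2)·K₁(t)² − b₁₁·K₁(t) − b₂₁·K₂(t) − i·u₃·κ₁·e^{−θt} + u₄·σ₂₁²·e^{−2θt} and K₂′(t) = (σ₁₂²/2)·K₂(t)² − b₂₂·K₂(t) − i·u₃·κ₂·e^{−θt} + u₄·σ₂₂²·e^{−2θt} for all t ≥ 0. If Re K₁(0) ≤ 0 and Re K₂(0) ≤ 0, then Re K₁(t) ≤ 0 and Re K₂(t) ≤ 0 for all t ≥ 0. -/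
/-!
Along a solution of a scalar Riccati equation `K' = c K² - b K + F` with `c ≥ 0` and
`Re F ≤ 0`, the real part `h = Re K` satisfies `h' ≤ (c h - b) h`, because
`Re (K²) = h² - (Im K)² ≤ h²`. A differential inequality `h' ≤ a h` with a locally bounded
coefficient keeps `h` nonpositive: on `[0, T]` a positive `h` could never cross the barrier
`ε e^{(|L|+1) t}`, where `L` bounds `a`. For the coupled system, `K₂` is handled first; then
`Re K₂ ≤ 0` and `b₂₁ ≤ 0` make the coupling term `-b₂₁ K₂` part of a forcing with nonpositive
real part in the equation for `K₁`.
-/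

open Real Complex Set

theorem nonpos_of_deriv_right_le_const_mul {h h' : ℝ → ℝ} {a b L : ℝ}
    (hf : ContinuousOn h (Icc a b)) (hf' : ∀ x ∈ Ico a b, HasDerivWithinAt h (h' x) (Ici x) x)
    (ha : h a ≤ 0) (bound : ∀ x ∈ Ico a b, 0 < h x → h' x ≤ L * h x) :
    ∀ x ∈ Icc a b, h x ≤ 0 := by
  intro x hx
  have barrier : ∀ ε > 0, h x ≤ ε * rexp ((|L| + 1) * x) := by
    intro ε hε
    refine image_le_of_deriv_right_lt_deriv_boundary hf hf'
      (B := fun t => ε * rexp ((|L| + 1) * t))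
      (B' := fun t => (|L| + 1) * (ε * rexp ((|L| + 1) * t))) (ha.trans (by positivity))
      (fun t => ?_) (fun t ht heq => ?_) hx
    · simpa [mul_comm, mul_left_comm] using (((hasDerivAt_id t).const_mul _).exp).const_mul ε
    · have hpos : 0 < h t := heq ▸ by positivity
      calc h' t ≤ L * h t := bound t ht hpos
        _ < (|L| + 1) * h t := by gcongr; linarith [le_abs_self L]
        _ = _ := by rw [heq]
  refine le_of_forall_pos_le_add fun δ hδ => ?_
  have hE := exp_pos ((|L| + 1) * x)
  simpa [div_mul_cancel₀ _ hE.ne'] using barrier (δ / rexp ((|L| + 1) * x)) (by positivity)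

theorem nonpos_of_hasDerivAt_le_mul {h h' c : ℝ → ℝ} {a : ℝ}
    (hf : ∀ x ∈ Ici a, HasDerivAt h (h' x) x) (hc : ContinuousOn c (Ici a))
    (ha : h a ≤ 0) (bound : ∀ x ∈ Ici a, 0 < h x → h' x ≤ c x * h x) :
    ∀ x ∈ Ici a, h x ≤ 0 := by
  intro x hx
  obtain ⟨L, hL⟩ := isCompact_Icc.bddAbove_image (hc.mono (Icc_subset_Ici_self : Icc a x ⊆ _))
  refine nonpos_of_deriv_right_le_const_mul (L := L)
    (fun t ht => (hf t ht.1).continuousAt.continuousWithinAt)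
    (fun t ht => (hf t ht.1).hasDerivWithinAt) ha (fun t ht hpos => ?_) x ⟨hx, le_rfl⟩
  calc h' t ≤ c t * h t := bound t ht.1 hpos
    _ ≤ L * h t := by gcongr; exact hL ⟨t, Ico_subset_Icc_self ht, rfl⟩

theorem re_nonpos_of_riccati {K F : ℝ → ℂ} {a c b : ℝ} (hc : 0 ≤ c)
    (hK : ∀ t ∈ Ici a, HasDerivAt K (c * K t ^ 2 - b * K t + F t) t)
    (hF : ∀ t ∈ Ici a, (F t).re ≤ 0) (ha : (K a).re ≤ 0) :
    ∀ t ∈ Ici a, (K t).re ≤ 0 := by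
  have hcont (t : ℝ) (ht : t ∈ Ici a) : ContinuousAt (fun s => c * (K s).re - b) t := by
    have := (hK t ht).continuousAt
    fun_prop
  refine nonpos_of_hasDerivAt_le_mul (fun t ht => reCLM.hasFDerivAt.comp_hasDerivAt t (hK t ht))
    (fun t ht => (hcont t ht).continuousWithinAt) ha fun t ht _ => ?_
  have := hF t ht
  simp only [reCLM_apply, add_re, sub_re, mul_re, ofReal_re, ofReal_im, sq]
  nlinarith [mul_nonneg hc (mul_self_nonneg (K t).im)]

theorem riccati_halfplane_invariance_general
    (σ11 σ12 σ21 σ22 b11 b22 θ : ℝ)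
    (b21 : ℝ) (hb21 : b21 ≤ 0)
    (κ1 κ2 u3 : ℝ) (u4 : ℝ) (hu4 : u4 ≤ 0)
    (K1 K2 : ℝ → ℂ)
    (hK1 : ∀ t, 0 ≤ t → HasDerivAt K1
      ((σ11 ^ 2 / 2 : ℂ) * K1 t ^ 2 - (b11 : ℂ) * K1 t - (b21 : ℂ) * K2 t
        - Complex.I * (u3 : ℂ) * (κ1 : ℂ) * (Real.exp (-θ * t) : ℂ)
        + (u4 : ℂ) * (σ21 ^ 2 : ℂ) * (Real.exp (-2 * θ * t) : ℂ)) t)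
    (hK2 : ∀ t, 0 ≤ t → HasDerivAt K2
      ((σ12 ^ 2 / 2 : ℂ) * K2 t ^ 2 - (b22 : ℂ) * K2 t
        - Complex.I * (u3 : ℂ) * (κ2 : ℂ) * (Real.exp (-θ * t) : ℂ)
        + (u4 : ℂ) * (σ22 ^ 2 : ℂ) * (Real.exp (-2 * θ * t) : ℂ)) t)
    (hK10 : (K1 0).re ≤ 0) (hK20 : (K2 0).re ≤ 0) :
    ∀ t, 0 ≤ t → (K1 t).re ≤ 0 ∧ (K2 t).re ≤ 0 := by
  have forcing_re_nonpos (κ σ t : ℝ) :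
      (-(I * u3 * κ * (rexp (-θ * t) : ℂ)) + u4 * (σ ^ 2 : ℂ) * (rexp (-2 * θ * t) : ℂ)).re
        ≤ 0 := by
    have : u4 * σ ^ 2 * rexp (-2 * θ * t) ≤ 0 :=
      mul_nonpos_of_nonpos_of_nonneg (mul_nonpos_of_nonpos_of_nonneg hu4 (sq_nonneg σ))
        (exp_pos _).le
    simp only [add_re, neg_re, mul_re, mul_im, I_re, I_im, ofReal_re, ofReal_im, sq]
    linarith
  have hK2_re : ∀ t ∈ Ici (0 : ℝ), (K2 t).re ≤ 0 :=
    re_nonpos_of_riccati (c := σ12 ^ 2 / 2) (b := b22)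
      (F := fun t => -(I * u3 * κ2 * (rexp (-θ * t) : ℂ))
        + u4 * (σ22 ^ 2 : ℂ) * (rexp (-2 * θ * t) : ℂ)) (by positivity)
      (fun t ht => (hK2 t ht).congr_deriv (by push_cast; ring))
      (fun t _ => forcing_re_nonpos κ2 σ22 t) hK20
  have hK1_re : ∀ t ∈ Ici (0 : ℝ), (K1 t).re ≤ 0 := by
    refine re_nonpos_of_riccati (c := σ11 ^ 2 / 2) (b := b11)
      (F := fun t => -(b21 * K2 t) + (-(I * u3 * κ1 * (rexp (-θ * t) : ℂ))
        + u4 * (σ21 ^ 2 : ℂ) * (rexp (-2 * θ * t) : ℂ))) (by positivity)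
      (fun t ht => (hK1 t ht).congr_deriv (by push_cast; ring)) (fun t ht => ?_) hK10
    have := forcing_re_nonpos κ1 σ21 t
    rw [add_re, neg_re, re_ofReal_mul]
    nlinarith [hK2_re t ht]
  exact fun t ht => ⟨hK1_re t ht, hK2_re t ht⟩

theorem riccati_halfplane_invariance
    (σ11 σ12 σ21 σ22 b11 b22 θ : ℝ)
    (hσ11 : 0 < σ11) (hσ12 : 0 < σ12) (hσ21 : 0 < σ21) (hσ22 : 0 < σ22)
    (hb11 : 0 < b11) (hb22 : 0 < b22) (hθ : 0 < θ)
    (b21 : ℝ) (hb21 : b21 ≤ 0)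
    (κ1 κ2 u3 : ℝ) (u4 : ℝ) (hu4 : u4 ≤ 0)
    (K1 K2 : ℝ → ℂ)
    (hK1 : ∀ t, 0 ≤ t → HasDerivAt K1
      ((σ11 ^ 2 / 2 : ℂ) * K1 t ^ 2 - (b11 : ℂ) * K1 t - (b21 : ℂ) * K2 t
        - Complex.I * (u3 : ℂ) * (κ1 : ℂ) * (Real.exp (-θ * t) : ℂ)
        + (u4 : ℂ) * (σ21 ^ 2 : ℂ) * (Real.exp (-2 * θ * t) : ℂ)) t)
    (hK2 : ∀ t, 0 ≤ t → HasDerivAt K2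
      ((σ12 ^ 2 / 2 : ℂ) * K2 t ^ 2 - (b22 : ℂ) * K2 t
        - Complex.I * (u3 : ℂ) * (κ2 : ℂ) * (Real.exp (-θ * t) : ℂ)
        + (u4 : ℂ) * (σ22 ^ 2 : ℂ) * (Real.exp (-2 * θ * t) : ℂ)) t)
    (hK10 : (K1 0).re ≤ 0) (hK20 : (K2 0).re ≤ 0) :
    ∀ t, 0 ≤ t → (K1 t).re ≤ 0 ∧ (K2 t).re ≤ 0 :=
  riccati_halfplane_invariance_general σ11 σ12 σ21 σ22 b11 b22 θ b21 hb21 κ1 κ2 u3 u4 hu4 K1 K2 hK1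
    hK2 hK10 hK20
end

section
/- Let σ₁₁, σ₂₁, b₁₁, θ ∈ (0,∞), b₂₁ ∈ (−∞,0], κ₁, u₃ ∈ ℝ, u₄ ∈ (−∞,0], C₂ ∈ (0,∞) and C₃ ∈ [0,∞). Let K₁, K₂ : [0,∞) → ℂ be differentiable with Re K₁(t) ≤ 0 and |K₂(t)| ≤ C₃·e^{−C₂ t} for all t ≥ 0, and suppose K₁′(t) = (σ₁₁²/2)·K₁(t)² − b₁₁·K₁(t) − b₂₁·K₂(t) − i·u₃·κ₁·e^{−θt} + u₄·σ₂₁²·e^{−2θt} for all t ≥ 0. Then there exists a constant C ∈ [0,∞) such that |K₁(t)| ≤ C·e^{−min(C₂, θ, b₁₁/2)·t} for all t ≥ 0. -/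
open MeasureTheory Filter Real Complex
open scoped ComplexConjugate

/-!
For `K' = s K² - b K + R` with `s ≥ 0`, `Re K ≤ 0` and `‖R t‖ ≤ A e^{-μt}`, the energy `‖K‖²` has
derivative `2 Re(conj K · K') = 2s ‖K‖² Re K - 2b ‖K‖² + 2 Re(conj K · R)`. The cubic term is
nonpositive, and Young's inequality on the last term gives
`(‖K‖²)' ≤ -(3b/2) ‖K‖² + (2/b) A² e^{-2μt}`. A Gronwall argument with the weight `e^{(3b/2)t}`
yields `‖K t‖² = O(e^{-2 min(μ, b/2) t})`. For the double Heston system, `μ = min(C₂, θ)` bounds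
the decay of the forcing built from `K₂` and the two exponentials.
-/

theorem le_mul_exp_of_hasDerivAt_le {φ φ' : ℝ → ℝ} {a r B : ℝ} (hra : r < a) (hB : 0 ≤ B)
    (hφ0 : 0 ≤ φ 0) (hφ : ∀ t, 0 ≤ t → HasDerivAt φ (φ' t) t)
    (hφ' : ∀ t, 0 ≤ t → φ' t ≤ -a * φ t + B * Real.exp (-r * t)) {t : ℝ} (ht : 0 ≤ t) :
    φ t ≤ (φ 0 + B / (a - r)) * Real.exp (-r * t) := by
  set c := B / (a - r)
  have hc : 0 ≤ c := div_nonneg hB (by linarith)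
  -- The weight `e^{as}` absorbs the `-aφ` term, and `c e^{(a-r)s}` is a primitive of the forcing.
  let F : ℝ → ℝ := fun s => Real.exp (a * s) * φ s - c * Real.exp ((a - r) * s)
  have hF : ∀ s, 0 ≤ s → HasDerivAt F
      (Real.exp (a * s) * (a * φ s + φ' s) - B * Real.exp ((a - r) * s)) s := by
    intro s hs
    refine ((((hasDerivAt_id s).const_mul a).exp.mul (hφ s hs)).sub
      (((hasDerivAt_id s).const_mul (a - r)).exp.const_mul c)).congr_deriv ?_
    simp only [id, mul_one, c]
    field_simp [(sub_pos.2 hra).ne']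
  have hF' : ∀ s, 0 ≤ s →
      Real.exp (a * s) * (a * φ s + φ' s) - B * Real.exp ((a - r) * s) ≤ 0 := by
    intro s hs
    calc Real.exp (a * s) * (a * φ s + φ' s) - B * Real.exp ((a - r) * s)
        ≤ Real.exp (a * s) * (B * Real.exp (-r * s)) - B * Real.exp ((a - r) * s) := by
          gcongr; linarith [hφ' s hs]
      _ = 0 := by rw [mul_left_comm, ← Real.exp_add, sub_eq_zero]; ring_nf
  have hanti : AntitoneOn F (Set.Ici 0) :=
    antitoneOn_of_hasDerivWithinAt_nonpos (convex_Ici 0)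
      (fun s hs => (hF s hs).continuousAt.continuousWithinAt)
      (fun s hs => (hF s (interior_subset hs)).hasDerivWithinAt)
      (fun s hs => hF' s (interior_subset hs))
  have hFt : Real.exp (a * t) * φ t - c * Real.exp ((a - r) * t) ≤ φ 0 - c := by
    simpa [F] using hanti Set.self_mem_Ici ht ht
  have hgrowth : 1 ≤ Real.exp ((a - r) * t) := Real.one_le_exp (by nlinarith)
  calc φ t = Real.exp (-(a * t)) * (Real.exp (a * t) * φ t) := by
        rw [← mul_assoc, ← Real.exp_add]; simp
    _ ≤ Real.exp (-(a * t)) * ((φ 0 + c) * Real.exp ((a - r) * t)) :=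
          mul_le_mul_of_nonneg_left (by nlinarith) (Real.exp_pos _).le
    _ = (φ 0 + c) * Real.exp (-r * t) := by rw [mul_left_comm, ← Real.exp_add]; ring_nf

theorem two_mul_inner_riccati_le {s b : ℝ} (hs : 0 ≤ s) (hb : 0 < b) {z : ℂ} (hz : z.re ≤ 0)
    (w : ℂ) :
    2 * inner ℝ z ((s : ℂ) * z ^ 2 - (b : ℂ) * z + w)
      ≤ -(3 * b / 2) * ‖z‖ ^ 2 + 2 / b * ‖w‖ ^ 2 := by
  have hsplit : inner ℝ z ((s : ℂ) * z ^ 2 - (b : ℂ) * z + w)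
      = s * ‖z‖ ^ 2 * z.re - b * ‖z‖ ^ 2 + inner ℝ z w := by
    have : ((s : ℂ) * z ^ 2 - b * z + w) * conj z
        = ((s * ‖z‖ ^ 2 : ℝ) : ℂ) * z - ((b * ‖z‖ ^ 2 : ℝ) : ℂ) + w * conj z := by
      push_cast; rw [← mul_conj']; ring
    rw [Complex.inner, Complex.inner, this]
    simp only [Complex.add_re, Complex.sub_re, Complex.re_ofReal_mul, Complex.ofReal_re]
  have hcubic : s * ‖z‖ ^ 2 * z.re ≤ 0 := mul_nonpos_of_nonneg_of_nonpos (by positivity) hz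
  have hyoung : 2 * (‖z‖ * ‖w‖) ≤ b / 2 * ‖z‖ ^ 2 + 2 / b * ‖w‖ ^ 2 := by
    have := sq_nonneg (b * ‖z‖ - 2 * ‖w‖)
    rw [div_mul_eq_mul_div, div_mul_eq_mul_div, div_add_div _ _ two_ne_zero hb.ne',
      le_div_iff₀ (by positivity)]
    nlinarith
  rw [hsplit]
  linarith [real_inner_le_norm z w]

theorem exists_norm_le_mul_exp_of_riccati {s b μ A : ℝ} (hs : 0 ≤ s) (hb : 0 < b) {K R : ℝ → ℂ}
    (hKre : ∀ t, 0 ≤ t → (K t).re ≤ 0) (hR : ∀ t, 0 ≤ t → ‖R t‖ ≤ A * Real.exp (-μ * t))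
    (hK : ∀ t, 0 ≤ t → HasDerivAt K ((s : ℂ) * K t ^ 2 - (b : ℂ) * K t + R t) t) :
    ∃ C, 0 ≤ C ∧ ∀ t, 0 ≤ t → ‖K t‖ ≤ C * Real.exp (-min μ (b / 2) * t) := by
  set ν := min μ (b / 2)
  have hνμ : ν ≤ μ := min_le_left _ _
  have hνb : ν ≤ b / 2 := min_le_right _ _
  have henergy : ∀ t, 0 ≤ t → 2 * inner ℝ (K t) ((s : ℂ) * K t ^ 2 - (b : ℂ) * K t + R t)
      ≤ -(3 * b / 2) * ‖K t‖ ^ 2 + 2 / b * A ^ 2 * Real.exp (-(2 * ν) * t) := by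
    intro t ht
    have hRsq : ‖R t‖ ^ 2 ≤ A ^ 2 * Real.exp (-(2 * ν) * t) :=
      calc ‖R t‖ ^ 2 ≤ (A * Real.exp (-μ * t)) ^ 2 :=
            pow_le_pow_left₀ (norm_nonneg _) (hR t ht) 2
        _ = A ^ 2 * Real.exp (-(2 * μ) * t) := by rw [mul_pow, ← Real.exp_nat_mul]; ring_nf
        _ ≤ A ^ 2 * Real.exp (-(2 * ν) * t) := by gcongr
    have hpointwise := two_mul_inner_riccati_le hs hb (hKre t ht) (R t)
    have hforcing : 2 / b * ‖R t‖ ^ 2 ≤ 2 / b * (A ^ 2 * Real.exp (-(2 * ν) * t)) := by gcongr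
    linarith
  set M := ‖K 0‖ ^ 2 + 2 / b * A ^ 2 / (3 * b / 2 - 2 * ν)
  have hdecay : ∀ t, 0 ≤ t → ‖K t‖ ^ 2 ≤ M * Real.exp (-(2 * ν) * t) := fun t ht =>
    le_mul_exp_of_hasDerivAt_le (φ := fun t => ‖K t‖ ^ 2) (by linarith) (by positivity)
      (by positivity) (fun t ht => (hK t ht).norm_sq) henergy ht
  refine ⟨√M, Real.sqrt_nonneg _, fun t ht => ?_⟩
  rw [← Real.sqrt_sq (norm_nonneg (K t))]
  calc √(‖K t‖ ^ 2) ≤ √(M * Real.exp (-(2 * ν) * t)) := Real.sqrt_le_sqrt (hdecay t ht)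
    _ = √M * Real.exp (-ν * t) := by
      rw [Real.sqrt_mul' _ (Real.exp_pos _).le, ← Real.sqrt_sq (Real.exp_pos (-ν * t)).le,
        ← Real.exp_nat_mul]
      ring_nf

theorem norm_forcing_le {θ C2 C3 b21 u3 κ1 u4 σ21 : ℝ} (hθ : 0 < θ) {K2 : ℝ → ℂ}
    (hK2 : ∀ t, 0 ≤ t → ‖K2 t‖ ≤ C3 * Real.exp (-C2 * t)) {t : ℝ} (ht : 0 ≤ t) :
    ‖-((b21 : ℂ) * K2 t) - Complex.I * (u3 : ℂ) * (κ1 : ℂ) * (Real.exp (-θ * t) : ℂ)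
        + (u4 : ℂ) * (σ21 ^ 2 : ℂ) * (Real.exp (-2 * θ * t) : ℂ)‖
      ≤ (|b21| * C3 + |u3 * κ1| + |u4| * σ21 ^ 2) * Real.exp (-min C2 θ * t) := by
  have hC3 : 0 ≤ C3 :=
    nonneg_of_mul_nonneg_left ((norm_nonneg _).trans (hK2 t ht)) (Real.exp_pos _)
  have h2θ : min C2 θ ≤ 2 * θ := (min_le_right _ _).trans (by linarith)
  calc _ ≤ ‖(b21 : ℂ) * K2 t‖ + ‖Complex.I * (u3 : ℂ) * (κ1 : ℂ) * (Real.exp (-θ * t) : ℂ)‖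
        + ‖(u4 : ℂ) * (σ21 ^ 2 : ℂ) * (Real.exp (-2 * θ * t) : ℂ)‖ := by
        refine (norm_add_le _ _).trans ?_
        gcongr
        exact (norm_sub_le _ _).trans_eq (by rw [norm_neg])
    _ = |b21| * ‖K2 t‖ + |u3 * κ1| * Real.exp (-θ * t)
        + |u4| * σ21 ^ 2 * Real.exp (-2 * θ * t) := by
        simp only [norm_mul, norm_pow, Complex.norm_I, Complex.norm_real, Real.norm_eq_abs,
          Real.abs_exp, abs_mul, sq_abs, one_mul]
    _ ≤ |b21| * (C3 * Real.exp (-min C2 θ * t)) + |u3 * κ1| * Real.exp (-min C2 θ * t)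
        + |u4| * σ21 ^ 2 * Real.exp (-min C2 θ * t) := by
        gcongr
        · exact (hK2 t ht).trans (by gcongr; exact min_le_left _ _)
        · exact min_le_right _ _
        · linarith
    _ = _ := by ring

theorem riccati_first_component_decay_general
    (σ11 σ21 b11 θ : ℝ)
    (hb11 : 0 < b11) (hθ : 0 < θ)
    (b21 : ℝ)
    (κ1 u3 : ℝ) (u4 : ℝ)
    (C2 C3 : ℝ)
    (K1 K2 : ℝ → ℂ)
    (hK1re : ∀ t, 0 ≤ t → (K1 t).re ≤ 0)
    (hK2bd : ∀ t, 0 ≤ t → ‖K2 t‖ ≤ C3 * Real.exp (-C2 * t))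
    (hK1 : ∀ t, 0 ≤ t → HasDerivAt K1
      ((σ11 ^ 2 / 2 : ℂ) * K1 t ^ 2 - (b11 : ℂ) * K1 t - (b21 : ℂ) * K2 t
        - Complex.I * (u3 : ℂ) * (κ1 : ℂ) * (Real.exp (-θ * t) : ℂ)
        + (u4 : ℂ) * (σ21 ^ 2 : ℂ) * (Real.exp (-2 * θ * t) : ℂ)) t) :
    ∃ C : ℝ, 0 ≤ C ∧ ∀ t, 0 ≤ t →
      ‖K1 t‖ ≤ C * Real.exp (-(min (min C2 θ) (b11 / 2)) * t) :=
  exists_norm_le_mul_exp_of_riccati (s := σ11 ^ 2 / 2) (by positivity) hb11 hK1re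
    (fun _ ht => norm_forcing_le (b21 := b21) (u3 := u3) (κ1 := κ1) (u4 := u4) (σ21 := σ21)
      hθ hK2bd ht)
    (fun t ht => (hK1 t ht).congr_deriv (by push_cast; ring))

theorem riccati_first_component_decay
    (σ11 σ21 b11 θ : ℝ)
    (hσ11 : 0 < σ11) (hσ21 : 0 < σ21) (hb11 : 0 < b11) (hθ : 0 < θ)
    (b21 : ℝ) (hb21 : b21 ≤ 0)
    (κ1 u3 : ℝ) (u4 : ℝ) (hu4 : u4 ≤ 0)
    (C2 C3 : ℝ) (hC2 : 0 < C2) (hC3 : 0 ≤ C3)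
    (K1 K2 : ℝ → ℂ)
    (hK1re : ∀ t, 0 ≤ t → (K1 t).re ≤ 0)
    (hK2bd : ∀ t, 0 ≤ t → ‖K2 t‖ ≤ C3 * Real.exp (-C2 * t))
    (hK1 : ∀ t, 0 ≤ t → HasDerivAt K1
      ((σ11 ^ 2 / 2 : ℂ) * K1 t ^ 2 - (b11 : ℂ) * K1 t - (b21 : ℂ) * K2 t
        - Complex.I * (u3 : ℂ) * (κ1 : ℂ) * (Real.exp (-θ * t) : ℂ)
        + (u4 : ℂ) * (σ21 ^ 2 : ℂ) * (Real.exp (-2 * θ * t) : ℂ)) t) :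
    ∃ C : ℝ, 0 ≤ C ∧ ∀ t, 0 ≤ t →
      ‖K1 t‖ ≤ C * Real.exp (-(min (min C2 θ) (b11 / 2)) * t) :=
  riccati_first_component_decay_general σ11 σ21 b11 θ hb11 hθ b21 κ1 u3 u4 C2 C3 K1 K2 hK1re hK2bd
    hK1
end

section
/- Let a₁, a₂, m, κ₁, κ₂ ∈ ℝ, b₂₁ ∈ (−∞,0], b₁₁, b₂₂, θ ∈ (0,∞) and σ₁₁, σ₁₂, σ₂₁, σ₂₂ ∈ ℝ. For α, β ∈ (0,∞) define V(y₁,y₂,x) := y₁² + α·y₂² + β·x² and (AV)(y₁,y₂,x) := (σ₁₁² + β·σ₂₁² + 2a₁)·y₁ + (α·σ₁₂² + β·σ₂₂² + 2α·a₂)·y₂ − 2b₁₁·y₁² − 2α·b₂₂·y₂² − 2α·b₂₁·y₁·y₂ + 2β·m·x − 2β·κ₁·y₁·x − 2β·κ₂·y₂·x − 2β·θ·x². Then for every c ∈ (0, 2·min(b₁₁, b₂₂, θ)) there exist α, β ∈ (0,∞) with β < α and d ∈ ℝ such that (AV)(y₁,y₂,x) ≤ −c·V(y₁,y₂,x) +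 d for all (y₁,y₂,x) ∈ [0,∞)² × ℝ. -/
open Real

set_option maxHeartbeats 1000000

private lemma amgm_aux (u v ε : ℝ) (hε : 0 < ε) : u * v ≤ ε * v ^ 2 + u ^ 2 / (4 * ε) := by
  rw [← sub_nonneg]
  have key : ε * v ^ 2 + u ^ 2 / (4 * ε) - u * v = (2 * ε * v - u) ^ 2 / (4 * ε) := by
    field_simp
    ring
  rw [key]
  positivity

theorem foster_lyapunov_drift_inequality
    (a1 a2 m κ1 κ2 b21 b11 b22 θ σ11 σ12 σ21 σ22 : ℝ)
    (hb21 : b21 ≤ 0) (hb11 : 0 < b11) (hb22 : 0 < b22) (hθ : 0 < θ) :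
    ∀ c : ℝ, 0 < c → c < 2 * min (min b11 b22) θ →
      ∃ α β d : ℝ, 0 < α ∧ 0 < β ∧ β < α ∧
        ∀ y1 y2 x : ℝ, 0 ≤ y1 → 0 ≤ y2 →
          (σ11 ^ 2 + β * σ21 ^ 2 + 2 * a1) * y1
            + (α * σ12 ^ 2 + β * σ22 ^ 2 + 2 * α * a2) * y2
            - 2 * b11 * y1 ^ 2 - 2 * α * b22 * y2 ^ 2 - 2 * α * b21 * y1 * y2
            + 2 * β * m * x - 2 * β * κ1 * y1 * x - 2 * β * κ2 * y2 * x
            - 2 * β * θ * x ^ 2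
          ≤ -c * (y1 ^ 2 + α * y2 ^ 2 + β * x ^ 2) + d := by
  intro c hc hcmin
  have hmin1 : min (min b11 b22) θ ≤ b11 := le_trans (min_le_left _ _) (min_le_left _ _)
  have hmin2 : min (min b11 b22) θ ≤ b22 := le_trans (min_le_left _ _) (min_le_right _ _)
  have hmin3 : min (min b11 b22) θ ≤ θ := min_le_right _ _
  have he1 : 0 < 2 * b11 - c := by linarith
  have he2 : 0 < 2 * b22 - c := by linarith
  have he3 : 0 < 2 * θ - c := by linarith
  have hB : 0 ≤ -b21 := by linarith
  -- the weight L for the cross term y1*y2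
  obtain ⟨L, hL, hLdef⟩ : ∃ L : ℝ, 0 < L ∧ L = (4 * (-b21) + (2 * b22 - c)) / (2 * b22 - c) :=
    ⟨_, div_pos (by linarith) he2, rfl⟩
  have hLmul : L * (2 * b22 - c) = 4 * (-b21) + (2 * b22 - c) := by
    rw [hLdef]; field_simp
  have hBL2 : (-b21) / L ≤ (2 * b22 - c) / 4 := by
    rw [div_le_div_iff₀ hL (by norm_num : (0:ℝ) < 4)]
    linarith
  -- the weight α
  have hden : 0 < (-b21) * L + 1 := by
    have := mul_nonneg hB hL.le
    linarith
  obtain ⟨α, hα, hαdef⟩ : ∃ α : ℝ, 0 < α ∧ α = (2 * b11 - c) / (4 * ((-b21) * L + 1)) :=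
    ⟨_, div_pos he1 (by linarith), rfl⟩
  have hαmul : α * ((-b21) * L + 1) = (2 * b11 - c) / 4 := by
    rw [hαdef, div_mul_eq_mul_div, div_eq_div_iff (by positivity : (4:ℝ) * (-b21 * L + 1) ≠ 0) (by norm_num : (4:ℝ) ≠ 0)]
    ring
  have hαBL : α * ((-b21) * L) ≤ (2 * b11 - c) / 4 := by nlinarith
  -- the weight β
  have hE1 : 0 < (2 * b11 - c) * (2 * θ - c) / (12 * (κ1 ^ 2 + 1)) :=
    div_pos (mul_pos he1 he3) (by positivity)
  have hE2 : 0 < α * (2 * b22 - c) * (2 * θ - c) / (12 * (κ2 ^ 2 + 1)) :=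
    div_pos (mul_pos (mul_pos hα he2) he3) (by positivity)
  obtain ⟨β, hβ, hβdef⟩ : ∃ β : ℝ, 0 < β ∧ β =
      min (α / 2) (min ((2 * b11 - c) * (2 * θ - c) / (12 * (κ1 ^ 2 + 1)))
        (α * (2 * b22 - c) * (2 * θ - c) / (12 * (κ2 ^ 2 + 1)))) :=
    ⟨_, lt_min (by linarith) (lt_min hE1 hE2), rfl⟩
  have hβα : β < α := by
    have : β ≤ α / 2 := hβdef ▸ min_le_left _ _
    linarith
  have hβ1 : β ≤ (2 * b11 - c) * (2 * θ - c) / (12 * (κ1 ^ 2 + 1)) :=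
    hβdef ▸ le_trans (min_le_right _ _) (min_le_left _ _)
  have hβ2 : β ≤ α * (2 * b22 - c) * (2 * θ - c) / (12 * (κ2 ^ 2 + 1)) :=
    hβdef ▸ le_trans (min_le_right _ _) (min_le_right _ _)
  have hβκ1 : 3 * β * κ1 ^ 2 / (2 * θ - c) ≤ (2 * b11 - c) / 4 := by
    rw [div_le_div_iff₀ he3 (by norm_num : (0:ℝ) < 4)]
    have h := (le_div_iff₀ (by positivity : (0:ℝ) < 12 * (κ1 ^ 2 + 1))).mp hβ1
    nlinarith
  have hβκ2 : 3 * β * κ2 ^ 2 / (2 * θ - c) ≤ α * (2 * b22 - c) / 4 := by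
    rw [div_le_div_iff₀ he3 (by norm_num : (0:ℝ) < 4)]
    have h := (le_div_iff₀ (by positivity : (0:ℝ) < 12 * (κ2 ^ 2 + 1))).mp hβ2
    nlinarith
  -- the constant d
  obtain ⟨d, hd⟩ : ∃ d : ℝ, d =
      (σ11 ^ 2 + β * σ21 ^ 2 + 2 * a1) ^ 2 / (4 * ((2 * b11 - c) / 2))
      + (α * σ12 ^ 2 + β * σ22 ^ 2 + 2 * α * a2) ^ 2 / (4 * (α * (2 * b22 - c) / 2))
      + (2 * β * m) ^ 2 / (4 * (β * (2 * θ - c) / 3)) := ⟨_, rfl⟩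
  refine ⟨α, β, d, hα, hβ, hβα, ?_⟩
  intro y1 y2 x hy1 hy2
  have hαe2 : 0 < α * (2 * b22 - c) / 2 := by
    have := mul_pos hα he2; linarith
  have hβe3 : 0 < β * (2 * θ - c) / 3 := by
    have := mul_pos hβ he3; linarith
  have h1 := amgm_aux (σ11 ^ 2 + β * σ21 ^ 2 + 2 * a1) y1 ((2 * b11 - c) / 2) (by linarith)
  have h2 := amgm_aux (α * σ12 ^ 2 + β * σ22 ^ 2 + 2 * α * a2) y2 (α * (2 * b22 - c) / 2) hαe2
  have h3 := amgm_aux (2 * β * m) x (β * (2 * θ - c) / 3) hβe3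
  have h4 := amgm_aux (-(2 * β * κ1 * y1)) x (β * (2 * θ - c) / 3) hβe3
  have h5 := amgm_aux (-(2 * β * κ2 * y2)) x (β * (2 * θ - c) / 3) hβe3
  have h6 := amgm_aux y2 y1 (L / 2) (by linarith)
  have c4 : (-(2 * β * κ1 * y1)) ^ 2 / (4 * (β * (2 * θ - c) / 3))
      = (3 * β * κ1 ^ 2 / (2 * θ - c)) * y1 ^ 2 := by
    field_simp
    ring
  have c5 : (-(2 * β * κ2 * y2)) ^ 2 / (4 * (β * (2 * θ - c) / 3))
      = (3 * β * κ2 ^ 2 / (2 * θ - c)) * y2 ^ 2 := by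
    field_simp
    ring
  rw [c4] at h4
  rw [c5] at h5
  have h6' : (2 * α * (-b21)) * (y2 * y1)
      ≤ (2 * α * (-b21)) * ((L / 2) * y1 ^ 2 + y2 ^ 2 / (4 * (L / 2))) := by
    apply mul_le_mul_of_nonneg_left h6
    have := mul_nonneg hα.le hB
    linarith
  have rhs6 : (2 * α * (-b21)) * ((L / 2) * y1 ^ 2 + y2 ^ 2 / (4 * (L / 2)))
      = (α * ((-b21) * L)) * y1 ^ 2 + (α * ((-b21) / L)) * y2 ^ 2 := by
    field_simp
    ring
  rw [rhs6] at h6'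
  have m1 : (α * ((-b21) * L)) * y1 ^ 2 ≤ ((2 * b11 - c) / 4) * y1 ^ 2 :=
    mul_le_mul_of_nonneg_right hαBL (sq_nonneg y1)
  have m2 : (α * ((-b21) / L)) * y2 ^ 2 ≤ (α * ((2 * b22 - c) / 4)) * y2 ^ 2 :=
    mul_le_mul_of_nonneg_right (mul_le_mul_of_nonneg_left hBL2 hα.le) (sq_nonneg y2)
  have m4 : (3 * β * κ1 ^ 2 / (2 * θ - c)) * y1 ^ 2 ≤ ((2 * b11 - c) / 4) * y1 ^ 2 :=
    mul_le_mul_of_nonneg_right hβκ1 (sq_nonneg y1)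
  have m5 : (3 * β * κ2 ^ 2 / (2 * θ - c)) * y2 ^ 2 ≤ (α * (2 * b22 - c) / 4) * y2 ^ 2 :=
    mul_le_mul_of_nonneg_right hβκ2 (sq_nonneg y2)
  linarith [h1, h2, h3, h4, h5, h6', m1, m2, m4, m5]
end

section
/- Let a, b, σ ∈ (0,∞) and x ∈ [0,∞). For μ ∈ (0,∞) set D(μ) := √(b² + 4σμ), E(μ) := (D(μ) − b)·e^{−D(μ)} + D(μ) + b, ψ̃(μ) := 2μ·(1 − e^{−D(μ)})/E(μ), and φ̃(μ) := −(1/σ)·( (b − D(μ))/2 + log 2 + log( D(μ)/E(μ) ) ). Then the integral ∫₀^∞ e^{−a·φ̃(μ)}·e^{−x·ψ̃(μ)} dμ is finite. -/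
/-!
Since `D(μ) ≥ b`, the denominator `E(μ)` dominates `D(μ)`, so `log (D/E) ≤ 0` and `ψ̃ ≥ 0`.
Together with `D(μ) ≥ 2√(σμ)` this bounds the integrand by `C · exp (-(a/√σ) √μ)`, which is
integrable on `(0, ∞)` (a Gamma-type integral).
-/

open MeasureTheory Real Set

noncomputable section

/-- `D(μ)`; the three definitions below are `E(μ)`, `ψ̃(μ)` and `φ̃(μ)` of the statement. -/
def cirDisc (b σ μ : ℝ) : ℝ := √(b ^ 2 + 4 * σ * μ)

def cirDenom (b σ μ : ℝ) : ℝ := (cirDisc b σ μ - b) * exp (-cirDisc b σ μ) + cirDisc b σ μ + b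

def cirPsi (b σ μ : ℝ) : ℝ := 2 * μ * (1 - exp (-cirDisc b σ μ)) / cirDenom b σ μ

def cirPhi (b σ μ : ℝ) : ℝ :=
  -(1 / σ) * ((b - cirDisc b σ μ) / 2 + log 2 + log (cirDisc b σ μ / cirDenom b σ μ))

end

section

variable {b σ μ : ℝ}

lemma le_cirDisc (hσ : 0 ≤ σ) (hμ : 0 ≤ μ) : b ≤ cirDisc b σ μ :=
  (le_abs_self b).trans (abs_le_sqrt (by nlinarith [mul_nonneg hσ hμ]))

lemma two_mul_sqrt_mul_sqrt_le_cirDisc (hσ : 0 ≤ σ) : 2 * √σ * √μ ≤ cirDisc b σ μ := by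
  rw [cirDisc, mul_assoc, ← sqrt_mul hσ, show 2 * √(σ * μ) = √(4 * σ * μ) by
    rw [mul_assoc, sqrt_mul zero_le_four, show (4 : ℝ) = 2 ^ 2 by norm_num, sqrt_sq two_pos.le]]
  exact sqrt_le_sqrt (by nlinarith)

lemma cirDisc_le_cirDenom (hb : 0 ≤ b) (hσ : 0 ≤ σ) (hμ : 0 ≤ μ) :
    cirDisc b σ μ ≤ cirDenom b σ μ := by
  have := mul_nonneg (sub_nonneg.2 (le_cirDisc (b := b) hσ hμ)) (exp_pos (-cirDisc b σ μ)).le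
  rw [cirDenom]
  linarith

lemma cirPsi_nonneg (hb : 0 ≤ b) (hσ : 0 ≤ σ) (hμ : 0 ≤ μ) : 0 ≤ cirPsi b σ μ := by
  have hD : 0 ≤ cirDisc b σ μ := sqrt_nonneg _
  have hexp : exp (-cirDisc b σ μ) ≤ 1 := exp_le_one_iff.2 (neg_nonpos.2 hD)
  exact div_nonneg (mul_nonneg (by positivity) (sub_nonneg.2 hexp))
    (hD.trans (cirDisc_le_cirDenom hb hσ hμ))

lemma neg_mul_cirPhi_le {a : ℝ} (ha : 0 ≤ a) (hb : 0 ≤ b) (hσ : 0 < σ) (hμ : 0 ≤ μ) :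
    -a * cirPhi b σ μ ≤ a / σ * (log 2 + b / 2) - a / √σ * √μ := by
  have hDE := cirDisc_le_cirDenom hb hσ.le hμ
  have hE : 0 ≤ cirDenom b σ μ := (sqrt_nonneg _).trans hDE
  have hlog : log (cirDisc b σ μ / cirDenom b σ μ) ≤ 0 :=
    log_nonpos (div_nonneg (sqrt_nonneg _) hE) (div_le_one_of_le₀ hDE hE)
  have hD := two_mul_sqrt_mul_sqrt_le_cirDisc (b := b) (μ := μ) hσ.le
  have hσ' : a / σ * √σ = a / √σ := by
    rw [div_mul_eq_mul_div, div_eq_div_iff hσ.ne' (sqrt_pos.2 hσ).ne', mul_assoc,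
      mul_self_sqrt hσ.le]
  calc -a * cirPhi b σ μ
      = a / σ * ((b - cirDisc b σ μ) / 2 + log 2 + log (cirDisc b σ μ / cirDenom b σ μ)) := by
        rw [cirPhi]; ring
    _ ≤ a / σ * ((b - 2 * √σ * √μ) / 2 + log 2) :=
        mul_le_mul_of_nonneg_left (by linarith) (by positivity)
    _ = a / σ * (log 2 + b / 2) - a / σ * √σ * √μ := by ring
    _ = a / σ * (log 2 + b / 2) - a / √σ * √μ := by rw [hσ']

end

lemma integrableOn_exp_neg_mul_sqrt {c : ℝ} (hc : 0 < c) :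
    IntegrableOn (fun μ : ℝ => exp (-c * √μ)) (Ioi 0) := by
  refine (integrableOn_rpow_mul_exp_neg_mul_rpow (s := 0) (p := 1 / 2) (by norm_num)
    (by norm_num) hc).congr_fun (fun μ _ => ?_) measurableSet_Ioi
  simp only [rpow_zero, one_mul, sqrt_eq_rpow]

theorem cir_inverse_integral_expectation_finite
    (a b σ x : ℝ) (ha : 0 < a) (hb : 0 < b) (hσ : 0 < σ) (hx : 0 ≤ x) :
    IntegrableOn
      (fun μ : ℝ =>
        Real.exp (-a * (-(1 / σ) *
          ((b - Real.sqrt (b ^ 2 + 4 * σ * μ)) / 2 + Real.log 2 +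
            Real.log (Real.sqrt (b ^ 2 + 4 * σ * μ) /
              ((Real.sqrt (b ^ 2 + 4 * σ * μ) - b) *
                  Real.exp (-Real.sqrt (b ^ 2 + 4 * σ * μ)) +
                Real.sqrt (b ^ 2 + 4 * σ * μ) + b))))) *
        Real.exp (-x * (2 * μ * (1 - Real.exp (-Real.sqrt (b ^ 2 + 4 * σ * μ))) /
          ((Real.sqrt (b ^ 2 + 4 * σ * μ) - b) *
              Real.exp (-Real.sqrt (b ^ 2 + 4 * σ * μ)) +
            Real.sqrt (b ^ 2 + 4 * σ * μ) + b))))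
      (Set.Ioi 0) := by
  change IntegrableOn (fun μ => exp (-a * cirPhi b σ μ) * exp (-x * cirPsi b σ μ)) (Ioi 0)
  have hmeas : Measurable fun μ => exp (-a * cirPhi b σ μ) * exp (-x * cirPsi b σ μ) := by
    unfold cirPhi cirPsi cirDenom cirDisc; fun_prop
  refine ((integrableOn_exp_neg_mul_sqrt (c := a / √σ) (by positivity)).const_mul
    (exp (a / σ * (log 2 + b / 2)))).mono' hmeas.aestronglyMeasurable ?_
  filter_upwards [ae_restrict_mem measurableSet_Ioi] with μ (hμ : 0 < μ)
  have hψ : exp (-x * cirPsi b σ μ) ≤ 1 :=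
    exp_le_one_iff.2 (by nlinarith [cirPsi_nonneg hb.le hσ.le hμ.le])
  rw [norm_of_nonneg (by positivity)]
  calc exp (-a * cirPhi b σ μ) * exp (-x * cirPsi b σ μ) ≤ exp (-a * cirPhi b σ μ) :=
        mul_le_of_le_one_right (exp_pos _).le hψ
    _ ≤ exp (a / σ * (log 2 + b / 2)) * exp (-(a / √σ) * √μ) := by
        rw [← exp_add, exp_le_exp]
        linarith [neg_mul_cirPhi_le ha.le hb.le hσ hμ.le]
end
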